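/- arXiv:2105.10278 — 4 statements merged into one kernel-verified Lean document; each statement's English description precedes it below -/
import Mathlib

section
/- Let φ = t₁ ∨ ⋯ ∨ tₙ be a DNF over Boolean variables, and construct a random forest with 2n−1 trees: for each term tᵢ one tree that outputs class 1 on exactly the assignments satisfying tᵢ (and 0 otherwise), plus n−1 constant trees that always output class 1. Then under majority vote, for every assignment x, the forest predicts class 1 if and only if φ(x) = 1. -/
/-- Evaluation of a term (conjunction of literals) on a Boolean assignment. -/
def termEval {m : ℕ} (t : List (Fin m × Bool)) (x : Fin m → Bool) : Bool :=
  t.all (fun p => x p.1 == p.2)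

/-- A DNF φ = t₁ ∨ ⋯ ∨ tₙ; the forest has n term-trees (tree i outputs 1 iff tᵢ is
satisfied) plus n−1 constant-1 trees, 2n−1 trees in total.  Under majority vote
(strictly more than half of 2n−1 trees output 1), the forest predicts 1 iff φ(x)=1. -/
theorem dnf_forest_majority_iff {m n : ℕ} (hn : 1 ≤ n)
    (t : Fin n → List (Fin m × Bool)) (x : Fin m → Bool) :
    2 * ((Finset.univ.filter (fun i => termEval (t i) x = true)).card + (n - 1)) > 2 * n - 1
      ↔ (∃ i, termEval (t i) x = true) := by
  have h : 0 < (Finset.univ.filter (fun i => termEval (t i) x = true)).card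
      ↔ (∃ i, termEval (t i) x = true) := by
    rw [Finset.card_pos, Finset.filter_nonempty_iff]
    simp
  rw [← h]
  omega
end

section
/- Let τ : F → K be a classifier on a finite product feature space and v ∈ F with τ(v) = c. A subset X ⊆ {1,…,m} is a weak abductive explanation (every point agreeing with v on X gets class c) if and only if X is a hitting set of the collection of all weak contrastive explanations (subsets Y such that some point agreeing with v outside Y gets a class ≠ c). -/
/-- X is a weak abductive explanation iff X is a hitting set of the collection of
all weak contrastive explanations. -/
theorem waxp_iff_hits_all_wcxp {m : ℕ} {D : Fin m → Type}
    [∀ i, Fintype (D i)] [∀ i, Nonempty (D i)] {K : Type}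
    (τ : (∀ i, D i) → K) (v : ∀ i, D i) (c : K) (hc : τ v = c)
    (X : Finset (Fin m)) :
    (∀ x : ∀ i, D i, (∀ i ∈ X, x i = v i) → τ x = c)
      ↔ ∀ Y : Finset (Fin m),
          (∃ x : ∀ i, D i, (∀ i ∉ Y, x i = v i) ∧ τ x ≠ c) → (X ∩ Y).Nonempty := by
  constructor
  · rintro h Y ⟨x, hx, hxc⟩
    by_contra hne
    rw [Finset.not_nonempty_iff_eq_empty] at hne
    exact hxc (h x fun i hi => hx i (fun hiY =>
      (Finset.notMem_empty i (hne ▸ Finset.mem_inter.2 ⟨hi, hiY⟩))))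
  · intro h x hx
    by_contra hxc
    classical
    have := h (Finset.univ.filter fun i => x i ≠ v i)
      ⟨x, fun i hi => by simpa using (by simpa using hi : ¬ x i ≠ v i), hxc⟩
    obtain ⟨i, hi⟩ := this
    rw [Finset.mem_inter, Finset.mem_filter] at hi
    exact hi.2.2 (hx i hi.1)
end

section
/- Minimal hitting set duality for explanations: for a classifier τ on a finite product feature space with instance v and τ(v)=c, a set X is a (subset-minimal) abductive explanation if and only if X is a minimal hitting set of the set of all contrastive explanations; dually, every minimal contrastive explanation is a minimal hitting set of the set of all abductive explanations. -/
/-!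
Weak AXps and weak CXps are both upward closed, and `X` is a weak AXp iff `Xᶜ` is not a weak
CXp. For an upward-closed family, `X` hits every member iff `Xᶜ` is not a member (a member
missing `X` lies inside `Xᶜ`). So the weak AXps are exactly the hitting sets of the weak CXps and
vice versa; the two predicates being equal, so are their subset-minimal elements.
-/

variable {m : ℕ} {D : Fin m → Type} {K : Type}

/-- Weak abductive explanation. -/
def WAXp (τ : (∀ i, D i) → K) (v : ∀ i, D i) (c : K) (X : Finset (Fin m)) : Prop :=
  ∀ x : ∀ i, D i, (∀ i ∈ X, x i = v i) → τ x = c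

/-- Weak contrastive explanation. -/
def WCXp (τ : (∀ i, D i) → K) (v : ∀ i, D i) (c : K) (Y : Finset (Fin m)) : Prop :=
  ∃ x : ∀ i, D i, (∀ i ∉ Y, x i = v i) ∧ τ x ≠ c

/-- Subset-minimal set satisfying a property. -/
def SubsetMinimalFor (P : Finset (Fin m) → Prop) (X : Finset (Fin m)) : Prop :=
  P X ∧ ∀ X' : Finset (Fin m), X' ⊂ X → ¬ P X'

/-- Hitting set of a family of sets. -/
def HittingSet (S : Set (Finset (Fin m))) (X : Finset (Fin m)) : Prop :=
  ∀ Y ∈ S, (X ∩ Y).Nonempty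

theorem hittingSet_iff_not_compl {Q : Finset (Fin m) → Prop} (hQ : Monotone Q)
    (X : Finset (Fin m)) : HittingSet {Y | Q Y} X ↔ ¬ Q Xᶜ := by
  refine ⟨fun hX hQX => ?_, fun hX Y hY => ?_⟩
  · obtain ⟨i, hi⟩ := hX Xᶜ hQX
    simp at hi
  · by_contra hdisj
    rw [Finset.not_nonempty_iff_eq_empty, ← Finset.disjoint_iff_inter_eq_empty] at hdisj
    exact hX (hQ (Finset.subset_compl_iff_disjoint_left.mpr hdisj) hY)

section

variable (τ : (∀ i, D i) → K) (v : ∀ i, D i) (c : K)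

theorem monotone_wAXp : Monotone (WAXp τ v c) :=
  fun _ _ hXX' hX x hx => hX x fun i hi => hx i (hXX' hi)

theorem monotone_wCXp : Monotone (WCXp τ v c) := by
  rintro Y Y' hYY' ⟨x, hx, hne⟩
  exact ⟨x, fun i hi => hx i fun h => hi (hYY' h), hne⟩

theorem wAXp_iff_not_wCXp_compl (X : Finset (Fin m)) : WAXp τ v c X ↔ ¬ WCXp τ v c Xᶜ := by
  simp only [WAXp, WCXp, Finset.mem_compl, not_not, not_exists, not_and, ne_eq]

theorem wCXp_iff_not_wAXp_compl (Y : Finset (Fin m)) : WCXp τ v c Y ↔ ¬ WAXp τ v c Yᶜ := by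
  rw [wAXp_iff_not_wCXp_compl, compl_compl, not_not]

theorem wAXp_eq_hittingSet : WAXp τ v c = HittingSet {Y | WCXp τ v c Y} := by
  ext X
  rw [hittingSet_iff_not_compl (monotone_wCXp τ v c), wAXp_iff_not_wCXp_compl]

theorem wCXp_eq_hittingSet : WCXp τ v c = HittingSet {X | WAXp τ v c X} := by
  ext Y
  rw [hittingSet_iff_not_compl (monotone_wAXp τ v c), wCXp_iff_not_wAXp_compl]

end

theorem axp_cxp_mhs_duality_general
    (τ : (∀ i, D i) → K) (v : ∀ i, D i) (c : K) :
    (∀ X : Finset (Fin m),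
        SubsetMinimalFor (WAXp τ v c) X
          ↔ SubsetMinimalFor (HittingSet {Y | WCXp τ v c Y}) X)
    ∧ (∀ Y : Finset (Fin m),
        SubsetMinimalFor (WCXp τ v c) Y
          ↔ SubsetMinimalFor (HittingSet {X | WAXp τ v c X}) Y) := by
  rw [← wAXp_eq_hittingSet, ← wCXp_eq_hittingSet]
  exact ⟨fun _ => Iff.rfl, fun _ => Iff.rfl⟩

/-- Minimal hitting set duality between abductive and contrastive explanations:
AXps are exactly the minimal hitting sets of the family of (weak) CXps, and
CXps are exactly the minimal hitting sets of the family of (weak) AXps. -/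
theorem axp_cxp_mhs_duality [∀ i, Fintype (D i)] [∀ i, Nonempty (D i)]
    (τ : (∀ i, D i) → K) (v : ∀ i, D i) (c : K) (hc : τ v = c) :
    (∀ X : Finset (Fin m),
        SubsetMinimalFor (WAXp τ v c) X
          ↔ SubsetMinimalFor (HittingSet {Y | WCXp τ v c Y}) X)
    ∧ (∀ Y : Finset (Fin m),
        SubsetMinimalFor (WCXp τ v c) Y
          ↔ SubsetMinimalFor (HittingSet {X | WAXp τ v c X}) Y) :=
  axp_cxp_mhs_duality_general τ v c
end

section
/- Let φ be a DNF over Boolean variables and let the random forest 𝔉_φ be constructed from φ as in the reduction (n term-trees and n−1 constant-1 trees). Then a conjunction of literals ρ is a prime implicant of φ if and only if ρ is a PI-explanation of the class-1 decision function τ₁ of 𝔉_φ, i.e., ρ entails τ₁ and no conjunction obtained from ρ by deleting one literal entails τ₁. -/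
/-- ρ entails a decision function f (as a predicate on assignments). -/
def entailsP {m : ℕ} (ρ : List (Fin m × Bool)) (f : (Fin m → Bool) → Prop) : Prop :=
  ∀ x : Fin m → Bool, (∀ p ∈ ρ, x p.1 = p.2) → f x

/-- ρ is a prime implicant of f: ρ entails f, and deleting any single literal of ρ
breaks entailment. -/
def primeImplicant {m : ℕ} (ρ : List (Fin m × Bool)) (f : (Fin m → Bool) → Prop) : Prop :=
  entailsP ρ f ∧ ∀ p ∈ ρ, ¬ entailsP (ρ.erase p) f

/-- For the forest 𝔉_φ constructed from a DNF φ with n terms (n term-trees plus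
n−1 constant-1 trees), ρ is a prime implicant of φ iff ρ is a PI-explanation of the
class-1 decision function τ₁ of 𝔉_φ (majority vote among the 2n−1 trees). -/
theorem prime_implicant_iff_pi_explanation {m n : ℕ} (hn : 1 ≤ n)
    (t : Fin n → List (Fin m × Bool)) (ρ : List (Fin m × Bool)) :
    primeImplicant ρ (fun x => ∃ i, termEval (t i) x = true)
      ↔ primeImplicant ρ (fun x =>
          n ≤ (Finset.univ.filter (fun i => termEval (t i) x = true)).card + (n - 1)) := by
  have key : ∀ x : Fin m → Bool, (∃ i, termEval (t i) x = true) ↔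
      n ≤ (Finset.univ.filter (fun i => termEval (t i) x = true)).card + (n - 1) := by
    intro x
    rw [show (∃ i, termEval (t i) x = true) ↔
        1 ≤ (Finset.univ.filter (fun i => termEval (t i) x = true)).card from ?_]
    · omega
    · rw [Finset.one_le_card]
      constructor
      · rintro ⟨i, hi⟩; exact ⟨i, Finset.mem_filter.mpr ⟨Finset.mem_univ i, hi⟩⟩
      · rintro ⟨i, hi⟩; exact ⟨i, (Finset.mem_filter.mp hi).2⟩
  unfold primeImplicant entailsP
  constructor <;> rintro ⟨h1, h2⟩ <;>
    refine ⟨fun x hx => ?_, fun p hp hc => h2 p hp (fun x hx => ?_)⟩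
  · exact (key x).mp (h1 x hx)
  · exact (key x).mpr (hc x hx)
  · exact (key x).mpr (h1 x hx)
  · exact (key x).mp (hc x hx)
end
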